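/- The cascade (X,f) of Example 2 of the paper is syndetically sensitive: there exists ε > 0 (e.g. ε = 1) such that for every nonempty open subset U of X, the set N(U,ε) = {n ∈ ℕ₀ : diam(fⁿ(U)) > ε} contains all sufficiently large odd numbers shifted appropriately, and in particular is syndetic with gaps bounded by 2. -/

import Mathlib

/-- `A ⊆ ℕ` is syndetic: bounded gaps. -/
def IsSyndetic (A : Set ℕ) : Prop := ∃ N : ℕ, ∀ t : ℕ, ∃ k < N, t + k ∈ A

/-- `A ⊆ ℕ` is thick: contains arbitrarily long runs of consecutive integers. -/
def IsThick (A : Set ℕ) : Prop := ∀ n : ℕ, ∃ t : ℕ, ∀ k ≤ n, t + k ∈ A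

/-- `N(A, ε) = {n : diam (fⁿ(A)) > ε}` for a cascade `f`. -/
def sensTimes {X : Type*} [PseudoMetricSpace X] (f : X → X) (A : Set X) (ε : ℝ) : Set ℕ :=
  {n : ℕ | ENNReal.ofReal ε < EMetric.diam (f^[n] '' A)}

/-- Sensitivity of a cascade. -/
def Sensitive {X : Type*} [PseudoMetricSpace X] (f : X → X) : Prop :=
  ∃ ε > (0 : ℝ), ∀ U : Set X, IsOpen U → U.Nonempty → (sensTimes f U ε).Nonempty

/-- Syndetic sensitivity of a cascade. -/
def SyndeticallySensitive {X : Type*} [PseudoMetricSpace X] (f : X → X) : Prop :=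
  ∃ ε > (0 : ℝ), ∀ U : Set X, IsOpen U → U.Nonempty → IsSyndetic (sensTimes f U ε)

/-- Thick sensitivity of a cascade. -/
def ThicklySensitive {X : Type*} [PseudoMetricSpace X] (f : X → X) : Prop :=
  ∃ ε > (0 : ℝ), ∀ U : Set X, IsOpen U → U.Nonempty → IsThick (sensTimes f U ε)

/-- Cofinite sensitivity of a cascade. -/
def CofinitelySensitive {X : Type*} [PseudoMetricSpace X] (f : X → X) : Prop :=
  ∃ ε > (0 : ℝ), ∀ U : Set X, IsOpen U → U.Nonempty → (sensTimes f U ε)ᶜ.Finite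

/-- The partial sums `𝓛ₙ = L₁ + ⋯ + Lₙ` of Example 2, where `L₀ = 0`, `L₁ = 2` and
`Lₙ = 2^(L₁ + ⋯ + L_{n-1})` for `n ≥ 2`; equivalently `𝓛₀ = 0`, `𝓛₁ = 2` and
`𝓛_{n+1} = 𝓛ₙ + 2^𝓛ₙ` for `n ≥ 1`. -/
def SL : ℕ → ℕ
  | 0 => 0
  | 1 => 2
  | (n + 2) => SL (n + 1) + 2 ^ SL (n + 1)

/-- The space `X` of Example 2:
`X = [0,1] ∪ ⋃_{n≥1} [𝓛_{2n-1}, 𝓛_{2n-1}+2n-1] ∪ ⋃_{n≥1} [𝓛_{2n}, 𝓛_{2n}+1/(2n)]`. -/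
def ExX : Set ℝ :=
  Set.Icc 0 1 ∪
    (⋃ m : ℕ, Set.Icc ((SL (2 * m + 1) : ℝ)) ((SL (2 * m + 1) : ℝ) + (2 * (m : ℝ) + 1))) ∪
    (⋃ m : ℕ, Set.Icc ((SL (2 * m + 2) : ℝ)) ((SL (2 * m + 2) : ℝ) + 1 / (2 * (m : ℝ) + 2)))

/-- `f` satisfies the defining formulas of the map of Example 2 (here `n = m + 1 ≥ 1`):
`f(x) = x + 2` on `[0,1]`,
`f(x) = (x - 𝓛_{2n-1})/(2n(2n-1)) + 𝓛_{2n}` on `[𝓛_{2n-1}, 𝓛_{2n-1}+2n-1]`, and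
`f(x) = 2n(2n+1)(x - 𝓛_{2n}) + 𝓛_{2n+1}` on `[𝓛_{2n}, 𝓛_{2n}+1/(2n)]`. -/
def ExMap (f : ExX → ExX) : Prop :=
  (∀ x : ExX, (x : ℝ) ∈ Set.Icc (0 : ℝ) 1 → (f x : ℝ) = (x : ℝ) + 2) ∧
  (∀ m : ℕ, ∀ x : ExX,
      (x : ℝ) ∈ Set.Icc ((SL (2 * m + 1) : ℝ)) ((SL (2 * m + 1) : ℝ) + (2 * (m : ℝ) + 1)) →
      (f x : ℝ) =
        ((x : ℝ) - (SL (2 * m + 1) : ℝ)) / ((2 * (m : ℝ) + 2) * (2 * (m : ℝ) + 1)) +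
          (SL (2 * m + 2) : ℝ)) ∧
  (∀ m : ℕ, ∀ x : ExX,
      (x : ℝ) ∈ Set.Icc ((SL (2 * m + 2) : ℝ)) ((SL (2 * m + 2) : ℝ) + 1 / (2 * (m : ℝ) + 2)) →
      (f x : ℝ) =
        (2 * (m : ℝ) + 2) * (2 * (m : ℝ) + 3) * ((x : ℝ) - (SL (2 * m + 2) : ℝ)) +
          (SL (2 * m + 3) : ℝ))

/-!
Parametrise the `i`-th interval of `X` affinely by `t ∈ [0,1]`. Each branch of `f` is the
increasing affine bijection of one interval onto the next, so `fⁿ` keeps the parameter and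
shifts the index by `n`. A nonempty open `U` contains two points with parameters `t ≠ s` on a
common interval `i`. At every time `n` with `i + n` odd their images lie on an interval of
length `i + n`, hence are more than `1` apart once `n > 1 / |t - s|`; since every other time
is such a time, `N(U, 1)` eventually meets every pair of consecutive integers.
-/

open Set

lemma isSyndetic_of_forall_exists_lt {A : Set ℕ} {m N : ℕ}
    (h : ∀ t, ∃ k < N, m + t + k ∈ A) : IsSyndetic A := by
  refine ⟨m + N, fun t => ?_⟩
  obtain ⟨k, hk, hA⟩ := h t
  exact ⟨m + k, by omega, by rwa [← add_assoc, add_comm t m]⟩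

lemma exists_forall_exists_lt_two_of_odd_add_mem {A : Set ℕ} {i M : ℕ}
    (h : ∀ n, M ≤ n → Odd (i + n) → n ∈ A) : ∃ m, ∀ t, ∃ k < 2, m + t + k ∈ A := by
  refine ⟨M, fun t => ?_⟩
  rcases Nat.even_or_odd (i + (M + t)) with he | ho
  · exact ⟨1, one_lt_two, h _ (by omega) (by rw [← add_assoc]; exact he.add_one)⟩
  · exact ⟨0, two_pos, h _ (by omega) ho⟩

lemma ofReal_lt_ediam_of_lt_dist {X : Type*} [PseudoMetricSpace X] {A : Set X} {x y : X}
    {ε : ℝ} (hε : 0 ≤ ε) (hx : x ∈ A) (hy : y ∈ A) (h : ε < dist x y) :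
    ENNReal.ofReal ε < Metric.ediam A :=
  calc ENNReal.ofReal ε < ENNReal.ofReal (dist x y) :=
        (ENNReal.ofReal_lt_ofReal_iff (hε.trans_lt h)).2 h
    _ = edist x y := (edist_dist x y).symm
    _ ≤ Metric.ediam A := Metric.edist_le_ediam_of_mem hx hy

lemma exists_ne_mem_Icc_abs_sub_lt {t η : ℝ} (ht : t ∈ Icc (0 : ℝ) 1) (hη : 0 < η) :
    ∃ s ∈ Icc (0 : ℝ) 1, s ≠ t ∧ |s - t| < η := by
  set r := min (η / 2) (1 / 2)
  have hr : 0 < r := by positivity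
  have hrη : r < η := (min_le_left _ _).trans_lt (half_lt_self hη)
  have hr1 : r ≤ 1 / 2 := min_le_right _ _
  obtain ⟨ht0, ht1⟩ := ht
  rcases le_or_gt t (1 / 2) with hle | hgt
  · refine ⟨t + r, ⟨by linarith, by linarith⟩, by linarith, ?_⟩
    rwa [add_sub_cancel_left, abs_of_pos hr]
  · refine ⟨t - r, ⟨by linarith, by linarith⟩, by linarith, ?_⟩
    rwa [sub_sub_cancel_left, abs_neg, abs_of_pos hr]

lemma nat_eq_zero_or_two_mul_add_one_or_two_mul_add_two (i : ℕ) :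
    i = 0 ∨ (∃ m, i = 2 * m + 1) ∨ ∃ m, i = 2 * m + 2 := by
  obtain ⟨k, rfl | rfl⟩ := Nat.even_or_odd' i
  · rcases k with _ | m
    · exact Or.inl rfl
    · exact Or.inr (Or.inr ⟨m, by ring⟩)
  · exact Or.inr (Or.inl ⟨k, rfl⟩)

/-- `X` is the union of the intervals `[𝓛ᵢ, 𝓛ᵢ + ExLen i]`, `i ∈ ℕ`, the `0`-th being `[0,1]`. -/
noncomputable def ExLen (i : ℕ) : ℝ :=
  if i = 0 then 1 else if i % 2 = 1 then (i : ℝ) else 1 / (i : ℝ)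

noncomputable def ExPt (i : ℕ) (t : ℝ) : ℝ := SL i + t * ExLen i

lemma ExLen_zero : ExLen 0 = 1 := by simp [ExLen]

lemma ExLen_two_mul_add_one (m : ℕ) : ExLen (2 * m + 1) = 2 * (m : ℝ) + 1 := by
  simp [ExLen, Nat.add_mod]

lemma ExLen_two_mul_add_two (m : ℕ) : ExLen (2 * m + 2) = 1 / (2 * (m : ℝ) + 2) := by
  have h : ¬ (2 * m + 2) % 2 = 1 := by omega
  simp only [ExLen, h, Nat.add_eq_zero_iff, two_ne_zero, and_false, if_false]
  push_cast; ring

lemma ExLen_of_odd {j : ℕ} (hj : Odd j) : ExLen j = j := by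
  obtain ⟨m, rfl⟩ := hj
  rw [ExLen_two_mul_add_one]; push_cast; ring

lemma ExLen_pos (i : ℕ) : 0 < ExLen i := by
  rcases nat_eq_zero_or_two_mul_add_one_or_two_mul_add_two i with rfl | ⟨m, rfl⟩ | ⟨m, rfl⟩
  · rw [ExLen_zero]; exact one_pos
  · rw [ExLen_two_mul_add_one]; positivity
  · rw [ExLen_two_mul_add_two]; positivity

lemma ExPt_sub_ExPt (i : ℕ) (t s : ℝ) : ExPt i t - ExPt i s = (t - s) * ExLen i := by
  unfold ExPt; ring

lemma ExPt_mem_Icc {i : ℕ} {t : ℝ} (ht : t ∈ Icc (0 : ℝ) 1) :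
    ExPt i t ∈ Icc (SL i : ℝ) (SL i + ExLen i) := by
  have := ExLen_pos i
  constructor <;> unfold ExPt <;> nlinarith [ht.1, ht.2]

lemma ExPt_mem_ExX (i : ℕ) {t : ℝ} (ht : t ∈ Icc (0 : ℝ) 1) : ExPt i t ∈ ExX := by
  have h := ExPt_mem_Icc (i := i) ht
  rcases nat_eq_zero_or_two_mul_add_one_or_two_mul_add_two i with rfl | ⟨m, rfl⟩ | ⟨m, rfl⟩
  · rw [ExLen_zero] at h
    exact Or.inl (Or.inl (by simpa [SL] using h))
  · rw [ExLen_two_mul_add_one] at h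
    exact Or.inl (Or.inr (mem_iUnion.2 ⟨m, by exact_mod_cast h⟩))
  · rw [ExLen_two_mul_add_two] at h
    exact Or.inr (mem_iUnion.2 ⟨m, by exact_mod_cast h⟩)

lemma exists_eq_ExPt_of_mem_ExX {x : ℝ} (hx : x ∈ ExX) :
    ∃ i, ∃ t ∈ Icc (0 : ℝ) 1, x = ExPt i t := by
  suffices ∃ i, x ∈ Icc (SL i : ℝ) (SL i + ExLen i) by
    obtain ⟨i, h0, h1⟩ := this
    have hL := ExLen_pos i
    refine ⟨i, (x - SL i) / ExLen i, ⟨by positivity, ?_⟩, ?_⟩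
    · rw [div_le_one hL]; linarith
    · unfold ExPt; field_simp; ring
  rcases hx with (h | h) | h
  · exact ⟨0, by simpa [SL, ExLen_zero] using h⟩
  · obtain ⟨m, hm⟩ := mem_iUnion.1 h
    exact ⟨2 * m + 1, by rw [ExLen_two_mul_add_one]; exact_mod_cast hm⟩
  · obtain ⟨m, hm⟩ := mem_iUnion.1 h
    exact ⟨2 * m + 2, by rw [ExLen_two_mul_add_two]; exact_mod_cast hm⟩

lemma exists_ExPt_pair_mem_of_isOpen {U : Set ExX} (hU : IsOpen U) (hne : U.Nonempty) :
    ∃ i, ∃ x ∈ U, ∃ y ∈ U, ∃ t ∈ Icc (0 : ℝ) 1, ∃ s ∈ Icc (0 : ℝ) 1,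
      t ≠ s ∧ (x : ℝ) = ExPt i t ∧ (y : ℝ) = ExPt i s := by
  obtain ⟨x, hxU⟩ := hne
  obtain ⟨δ, hδ, hball⟩ := Metric.isOpen_iff.1 hU x hxU
  obtain ⟨i, t, ht, hxt⟩ := exists_eq_ExPt_of_mem_ExX x.2
  have hL := ExLen_pos i
  obtain ⟨s, hs, hst, hsδ⟩ := exists_ne_mem_Icc_abs_sub_lt ht (div_pos hδ hL)
  let y : ExX := ⟨ExPt i s, ExPt_mem_ExX i hs⟩
  have hyU : y ∈ U := hball <| by
    rw [Metric.mem_ball, Subtype.dist_eq, Real.dist_eq, hxt, ExPt_sub_ExPt, abs_mul,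
      abs_of_pos hL, ← lt_div_iff₀ hL]
    exact hsδ
  exact ⟨i, x, hxU, y, hyU, t, ht, s, hs, hst.symm, hxt, rfl⟩

namespace ExMap

variable {f : ExX → ExX}

lemma apply_ExPt (hf : ExMap f) {x : ExX} {i : ℕ} {t : ℝ} (ht : t ∈ Icc (0 : ℝ) 1)
    (hx : (x : ℝ) = ExPt i t) : (f x : ℝ) = ExPt (i + 1) t := by
  have hmem := ExPt_mem_Icc (i := i) ht
  rw [← hx] at hmem
  unfold ExPt at hx ⊢
  rcases nat_eq_zero_or_two_mul_add_one_or_two_mul_add_two i with rfl | ⟨m, rfl⟩ | ⟨m, rfl⟩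
  · rw [ExLen_zero] at hmem hx
    rw [hf.1 x (by simpa [SL] using hmem), hx, zero_add, ExLen_of_odd odd_one]
    simp [SL]; ring
  · rw [ExLen_two_mul_add_one] at hmem hx
    rw [hf.2.1 m x (by exact_mod_cast hmem), hx, ExLen_two_mul_add_two]
    field_simp
    ring
  · rw [ExLen_two_mul_add_two] at hmem hx
    rw [hf.2.2 m x (by exact_mod_cast hmem), hx, show 2 * m + 2 + 1 = 2 * (m + 1) + 1 by ring,
      ExLen_two_mul_add_one]
    push_cast
    field_simp
    ring

lemma iterate_apply_ExPt (hf : ExMap f) (n : ℕ) {x : ExX} {i : ℕ} {t : ℝ}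
    (ht : t ∈ Icc (0 : ℝ) 1) (hx : (x : ℝ) = ExPt i t) : (f^[n] x : ℝ) = ExPt (i + n) t := by
  induction n generalizing x i with
  | zero => exact hx
  | succ n ih =>
    rw [Function.iterate_succ_apply, ih (hf.apply_ExPt ht hx), add_right_comm, add_assoc]

lemma dist_iterate_of_odd (hf : ExMap f) {n i : ℕ} (hodd : Odd (i + n)) {x y : ExX} {t s : ℝ}
    (ht : t ∈ Icc (0 : ℝ) 1) (hs : s ∈ Icc (0 : ℝ) 1)
    (hx : (x : ℝ) = ExPt i t) (hy : (y : ℝ) = ExPt i s) :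
    dist (f^[n] x) (f^[n] y) = |t - s| * (i + n : ℕ) := by
  rw [Subtype.dist_eq, Real.dist_eq, hf.iterate_apply_ExPt n ht hx, hf.iterate_apply_ExPt n hs hy,
    ExPt_sub_ExPt, abs_mul, ExLen_of_odd hodd, Nat.abs_cast]

end ExMap

theorem ExMap_syndeticallySensitive_general (f : ExX → ExX) (hf : ExMap f) :
    ∃ ε > (0 : ℝ), ∀ U : Set ExX, IsOpen U → U.Nonempty →
      IsSyndetic (sensTimes f U ε) ∧
        ∃ m : ℕ, ∀ t : ℕ, ∃ k < 2, m + t + k ∈ sensTimes f U ε := by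
  refine ⟨1, one_pos, fun U hU hne => ?_⟩
  obtain ⟨i, x, hxU, y, hyU, t, ht, s, hs, hts, hx, hy⟩ := exists_ExPt_pair_mem_of_isOpen hU hne
  have hgap : 0 < |t - s| := abs_pos.2 (sub_ne_zero.2 hts)
  have hodd : ∀ n, ⌊1 / |t - s|⌋₊ + 1 ≤ n → Odd (i + n) → n ∈ sensTimes f U 1 := by
    intro n hn hodd
    refine ofReal_lt_ediam_of_lt_dist zero_le_one (mem_image_of_mem _ hxU)
      (mem_image_of_mem _ hyU) ?_
    rw [hf.dist_iterate_of_odd hodd ht hs hx hy, ← div_lt_iff₀' hgap]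
    calc 1 / |t - s| < ⌊1 / |t - s|⌋₊ + 1 := Nat.lt_floor_add_one _
      _ ≤ (i + n : ℕ) := by exact_mod_cast hn.trans (Nat.le_add_left n i)
  obtain ⟨m, hm⟩ := exists_forall_exists_lt_two_of_odd_add_mem hodd
  exact ⟨isSyndetic_of_forall_exists_lt hm, m, hm⟩

/-- The cascade of Example 2 is syndetically sensitive (with `ε = 1`): for every nonempty
open `U ⊆ X`, `N(U, 1)` is syndetic; in fact from some point on it meets every pair of
consecutive integers (gaps bounded by 2). -/
theorem ExMap_syndeticallySensitive (f : ExX → ExX) (hc : Continuous f) (hf : ExMap f) :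
    ∃ ε > (0 : ℝ), ∀ U : Set ExX, IsOpen U → U.Nonempty →
      IsSyndetic (sensTimes f U ε) ∧
        ∃ m : ℕ, ∀ t : ℕ, ∃ k < 2, m + t + k ∈ sensTimes f U ε :=
  ExMap_syndeticallySensitive_general f hf
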